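/- If B is an n×m complex matrix of rank at most 2, then for all m×n complex matrices A, C, ‖ABC − CBA‖_F² ≤ ‖B‖₂²‖A⊗C − C⊗A‖_F². -/

import Mathlib

open Matrix Kronecker BigOperators

/-- Squared Frobenius norm of a complex matrix. -/
noncomputable def frobSq {m n : Type*} [Fintype m] [Fintype n] (A : Matrix m n ℂ) : ℝ :=
  ∑ i, ∑ j, ‖A i j‖ ^ 2

/-- Eigenvalues of a Hermitian matrix sorted in decreasing order (junk value `[]` otherwise). -/
noncomputable def eigsSorted {k : Type*} [Fintype k] [DecidableEq k] (H : Matrix k k ℂ) : List ℝ :=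
  if hH : H.IsHermitian then (Finset.univ.toList.map hH.eigenvalues).insertionSort (· ≥ ·) else []

/-- `eigNth H i` is the `i`-th largest eigenvalue (1-indexed) of the Hermitian matrix `H`,
with junk value `0` out of range. -/
noncomputable def eigNth {k : Type*} [Fintype k] [DecidableEq k] (H : Matrix k k ℂ) (i : ℕ) : ℝ :=
  (eigsSorted H).getD (i - 1) 0

/-- `sv A i` is the `i`-th largest singular value (1-indexed) of `A`,
taken to be `0` out of range. -/
noncomputable def sv {m n : Type*} [Fintype m] [Fintype n] [DecidableEq n]
    (A : Matrix m n ℂ) (i : ℕ) : ℝ :=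
  Real.sqrt (eigNth (Aᴴ * A) i)

/-- `vecCols Y` stacks the columns of `Y` into one column vector. -/
def vecCols {n m : Type*} (Y : Matrix n m ℂ) : m × n → ℂ := fun p => Y p.2 p.1

/-!
Let `W` be the realignment of `A ⊗ C - C ⊗ A`, the matrix with `vec (A B C - C B A) = W vec Bᵀ`;
it has the same Frobenius norm as `A ⊗ C - C ⊗ A` and it is skew-symmetric, `Wᵀ = -W`.
For a skew-symmetric `W` and any `x`, the vector `y = conj (W x)` is orthogonal to `x`, and
`‖W y‖ = ‖Wᴴ W x‖ ≥ ‖W x‖² / ‖x‖`. Bessel's inequality for the pair `x, y`, applied to every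
row of `W`, then gives `2 ‖W x‖² ≤ ‖W‖_F² ‖x‖²`. Finally `‖B‖_F²` is the sum of the squared
singular values of `B`, at most `rank B · σ₁(B)²`.
-/

open WithLp
open scoped InnerProductSpace

section Bessel

variable {𝕜 E : Type*} [RCLike 𝕜] [NormedAddCommGroup E] [InnerProductSpace 𝕜 E]

theorem norm_inner_sq_mul_add_le_of_inner_eq_zero {u v : E} (huv : ⟪u, v⟫_𝕜 = 0) (r : E) :
    ‖⟪u, r⟫_𝕜‖ ^ 2 * ‖v‖ ^ 2 + ‖⟪v, r⟫_𝕜‖ ^ 2 * ‖u‖ ^ 2 ≤ ‖r‖ ^ 2 * (‖u‖ ^ 2 * ‖v‖ ^ 2) := by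
  rcases eq_or_ne u 0 with rfl | hu
  · simp
  rcases eq_or_ne v 0 with rfl | hv
  · simp
  have hu' : 0 < ‖u‖ := norm_pos_iff.mpr hu
  have hv' : 0 < ‖v‖ := norm_pos_iff.mpr hv
  have hortho : Orthonormal 𝕜 ![(‖u‖⁻¹ : 𝕜) • u, (‖v‖⁻¹ : 𝕜) • v] := by
    refine ⟨fun i => by fin_cases i <;> simp [norm_smul_inv_norm, hu, hv], fun i j hij => ?_⟩
    have hvu : ⟪v, u⟫_𝕜 = 0 := inner_eq_zero_symm.mp huv
    fin_cases i <;> fin_cases j <;> simp_all [inner_smul_left, inner_smul_right]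
  have hbessel := hortho.sum_inner_products_le r (s := Finset.univ)
  simp only [Fin.sum_univ_two, Matrix.cons_val_zero, Matrix.cons_val_one, inner_smul_left,
    norm_mul, RCLike.norm_conj, norm_inv, RCLike.norm_ofReal, abs_norm] at hbessel
  field_simp at hbessel
  linarith

end Bessel

section Frobenius

variable {ι κ : Type*} [Fintype ι] [Fintype κ]

theorem frobSq_nonneg (M : Matrix κ ι ℂ) : 0 ≤ frobSq M := by
  unfold frobSq; positivity

theorem frobSq_transpose (M : Matrix κ ι ℂ) : frobSq Mᵀ = frobSq M :=
  Finset.sum_comm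

theorem norm_sq_toLp_vec (M : Matrix κ ι ℂ) : ‖toLp 2 (vec M)‖ ^ 2 = frobSq M := by
  rw [EuclideanSpace.norm_sq_eq, Fintype.sum_prod_type, frobSq, Finset.sum_comm]
  rfl

theorem norm_toLp_star (z : ι → ℂ) : ‖toLp 2 (star z)‖ = ‖toLp 2 z‖ := by
  simp [EuclideanSpace.norm_eq]

theorem re_trace_conjTranspose_mul_self (M : Matrix κ ι ℂ) : (Mᴴ * M).trace.re = frobSq M := by
  rw [← star_vec_dotProduct_vec, dotProduct_comm, ← norm_sq_toLp_vec,
    ← inner_self_eq_norm_sq (𝕜 := ℂ)]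
  rfl

variable [DecidableEq ι]

theorem norm_sq_toEuclideanLin_mul_add_le_of_inner_eq_zero (W : Matrix κ ι ℂ)
    {u v : EuclideanSpace ℂ ι} (huv : ⟪u, v⟫_ℂ = 0) :
    ‖W.toEuclideanLin u‖ ^ 2 * ‖v‖ ^ 2 + ‖W.toEuclideanLin v‖ ^ 2 * ‖u‖ ^ 2 ≤
      frobSq W * (‖u‖ ^ 2 * ‖v‖ ^ 2) := by
  let row : κ → EuclideanSpace ℂ ι := fun p => toLp 2 (star (W p))
  have hrow : ∀ (x : EuclideanSpace ℂ ι) p, ‖(W.toEuclideanLin x) p‖ = ‖⟪x, row p⟫_ℂ‖ := by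
    intro x p
    rw [EuclideanSpace.inner_eq_star_dotProduct, ← norm_star, star_dotProduct, star_star,
      dotProduct_comm]
    rfl
  have hrow_norm : ∀ p, ‖row p‖ ^ 2 = ∑ q, ‖W p q‖ ^ 2 := by
    intro p
    simp [row, EuclideanSpace.norm_sq_eq]
  calc ‖W.toEuclideanLin u‖ ^ 2 * ‖v‖ ^ 2 + ‖W.toEuclideanLin v‖ ^ 2 * ‖u‖ ^ 2
      = ∑ p, (‖⟪u, row p⟫_ℂ‖ ^ 2 * ‖v‖ ^ 2 + ‖⟪v, row p⟫_ℂ‖ ^ 2 * ‖u‖ ^ 2) := by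
        simp only [EuclideanSpace.norm_sq_eq, Finset.sum_add_distrib, Finset.sum_mul, hrow]
    _ ≤ ∑ p, ‖row p‖ ^ 2 * (‖u‖ ^ 2 * ‖v‖ ^ 2) :=
        Finset.sum_le_sum fun p _ => norm_inner_sq_mul_add_le_of_inner_eq_zero huv (row p)
    _ = frobSq W * (‖u‖ ^ 2 * ‖v‖ ^ 2) := by
        simp only [← Finset.sum_mul, hrow_norm, frobSq]

end Frobenius

section Skew

variable {ι : Type*} [Fintype ι]

theorem dotProduct_mulVec_self_eq_zero_of_transpose_eq_neg {R : Type*} [CommRing R]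
    [IsAddTorsionFree R] {W : Matrix ι ι R} (hW : Wᵀ = -W) (x : ι → R) :
    x ⬝ᵥ W *ᵥ x = 0 := by
  refine self_eq_neg.mp ?_
  calc x ⬝ᵥ W *ᵥ x = Wᵀ *ᵥ x ⬝ᵥ x := by rw [dotProduct_mulVec, mulVec_transpose]
    _ = -(x ⬝ᵥ W *ᵥ x) := by rw [hW, neg_mulVec, neg_dotProduct, dotProduct_comm]

theorem mulVec_star_of_transpose_eq_neg {W : Matrix ι ι ℂ} (hW : Wᵀ = -W) (v : ι → ℂ) :
    W *ᵥ star v = -star (Wᴴ *ᵥ v) := by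
  rw [star_mulVec, conjTranspose_conjTranspose, ← mulVec_transpose, hW, neg_mulVec, neg_neg]

variable [DecidableEq ι]

theorem two_mul_norm_sq_toEuclideanLin_le_of_transpose_eq_neg {W : Matrix ι ι ℂ} (hW : Wᵀ = -W)
    (x : EuclideanSpace ℂ ι) :
    2 * ‖W.toEuclideanLin x‖ ^ 2 ≤ frobSq W * ‖x‖ ^ 2 := by
  set Wx := W.toEuclideanLin x
  have hWx : ofLp Wx = W *ᵥ ofLp x := rfl
  set y : EuclideanSpace ℂ ι := toLp 2 (star (ofLp Wx))
  have hxy : ⟪x, y⟫_ℂ = 0 := by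
    rw [EuclideanSpace.inner_eq_star_dotProduct, star_dotProduct_star, hWx,
      dotProduct_mulVec_self_eq_zero_of_transpose_eq_neg hW, star_zero]
  have hy : ‖y‖ = ‖Wx‖ := norm_toLp_star _
  have hWy : ‖W.toEuclideanLin y‖ = ‖Wᴴ.toEuclideanLin Wx‖ := by
    change ‖toLp 2 (W *ᵥ star (ofLp Wx))‖ = ‖toLp 2 (Wᴴ *ᵥ ofLp Wx)‖
    rw [mulVec_star_of_transpose_eq_neg hW, toLp_neg, norm_neg, norm_toLp_star]
  have hcs : ‖Wx‖ ^ 2 ≤ ‖x‖ * ‖Wᴴ.toEuclideanLin Wx‖ := by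
    rw [← inner_self_eq_norm_sq (𝕜 := ℂ), ← LinearMap.adjoint_inner_right,
      ← toEuclideanLin_conjTranspose_eq_adjoint]
    exact re_inner_le_norm _ _
  have hbessel := norm_sq_toEuclideanLin_mul_add_le_of_inner_eq_zero W hxy
  rw [hy, hWy] at hbessel
  rcases (sq_nonneg ‖Wx‖).eq_or_lt with h0 | hpos
  · rw [← h0, mul_zero]
    exact mul_nonneg (frobSq_nonneg W) (sq_nonneg _)
  · have hcs_sq : (‖Wx‖ ^ 2) ^ 2 ≤ (‖x‖ * ‖Wᴴ.toEuclideanLin Wx‖) ^ 2 :=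
      pow_le_pow_left₀ (sq_nonneg _) hcs 2
    refine le_of_mul_le_mul_right ?_ hpos
    linarith [hbessel, hcs_sq]

end Skew

section Realign

variable {R l m n p : Type*}

def realign (K : Matrix (l × m) (n × p) R) : Matrix (p × l) (n × m) R :=
  of fun a b => K (a.2, b.2) (b.1, a.1)

@[simp]
theorem realign_apply (K : Matrix (l × m) (n × p) R) (a : p × l) (b : n × m) :
    realign K a b = K (a.2, b.2) (b.1, a.1) :=
  rfl

theorem realign_sub [Sub R] (K L : Matrix (l × m) (n × p) R) :
    realign (K - L) = realign K - realign L :=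
  rfl

theorem transpose_realign_kronecker [CommMagma R] (A : Matrix l n R) (C : Matrix m p R) :
    (realign (A ⊗ₖ C))ᵀ = realign (C ⊗ₖ A) := by
  ext a b
  exact mul_comm _ _

theorem realign_kronecker_mulVec_vec_transpose [CommSemiring R] [Fintype n] [Fintype m]
    (A : Matrix l n R) (B : Matrix n m R) (C : Matrix m p R) :
    realign (A ⊗ₖ C) *ᵥ vec Bᵀ = vec (A * B * C) := by
  ext ⟨c, a⟩
  simp only [mulVec, dotProduct, Fintype.sum_prod_type, realign_apply, kroneckerMap_apply, vec,
    transpose_apply, mul_apply, Finset.sum_mul]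
  rw [Finset.sum_comm]
  exact Finset.sum_congr rfl fun j _ => Finset.sum_congr rfl fun i _ => by ring

theorem frobSq_realign [Fintype l] [Fintype m] [Fintype n] [Fintype p]
    (K : Matrix (l × m) (n × p) ℂ) : frobSq (realign K) = frobSq K := by
  rw [frobSq, frobSq, ← Fintype.sum_prod_type' (f := fun a b => ‖realign K a b‖ ^ 2),
    ← Fintype.sum_prod_type' (f := fun a b => ‖K a b‖ ^ 2)]
  exact Fintype.sum_equiv
    { toFun := fun x => ((x.1.2, x.2.2), (x.2.1, x.1.1))
      invFun := fun y => ((y.2.2, y.1.1), (y.2.1, y.1.2))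
      left_inv := fun _ => rfl
      right_inv := fun _ => rfl } _ _ fun _ => rfl

end Realign

section Rank

variable {ι κ : Type*} [Fintype ι] [Fintype κ] [DecidableEq ι]

theorem le_getD_zero_of_pairwise_ge {L : List ℝ} (hL : L.Pairwise (· ≥ ·)) {a : ℝ} (ha : a ∈ L)
    (d : ℝ) : a ≤ L.getD 0 d := by
  cases L with
  | nil => simp at ha
  | cons b L =>
    rcases List.mem_cons.mp ha with rfl | ha
    · exact le_rfl
    · exact (List.pairwise_cons.mp hL).1 a ha

theorem Matrix.IsHermitian.eigenvalues_le_eigNth_one {H : Matrix ι ι ℂ} (hH : H.IsHermitian)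
    (j : ι) : hH.eigenvalues j ≤ eigNth H 1 := by
  rw [eigNth, eigsSorted, dif_pos hH]
  refine le_getD_zero_of_pairwise_ge (List.pairwise_insertionSort _ _) ?_ 0
  exact (List.perm_insertionSort _ _).mem_iff.mpr
    (List.mem_map_of_mem (Finset.mem_toList.mpr (Finset.mem_univ j)))

theorem eigenvalues_conjTranspose_mul_self_le_sv_one_sq (M : Matrix κ ι ℂ) (j : ι) :
    (isHermitian_conjTranspose_mul_self M).eigenvalues j ≤ sv M 1 ^ 2 := by
  have h := (isHermitian_conjTranspose_mul_self M).eigenvalues_le_eigNth_one j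
  rwa [sv, Real.sq_sqrt ((M.eigenvalues_conjTranspose_mul_self_nonneg j).trans h)]

theorem frobSq_eq_sum_eigenvalues_conjTranspose_mul_self (M : Matrix κ ι ℂ) :
    frobSq M = ∑ j, (isHermitian_conjTranspose_mul_self M).eigenvalues j := by
  rw [← re_trace_conjTranspose_mul_self,
    (isHermitian_conjTranspose_mul_self M).trace_eq_sum_eigenvalues]
  simp

open scoped ComplexOrder in
theorem frobSq_le_rank_mul_sv_one_sq (M : Matrix κ ι ℂ) : frobSq M ≤ M.rank * sv M 1 ^ 2 := by
  set hH := isHermitian_conjTranspose_mul_self M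
  set S := Finset.univ.filter fun j => hH.eigenvalues j ≠ 0
  have hrank : M.rank = S.card := by
    rw [← rank_conjTranspose_mul_self, hH.rank_eq_card_non_zero_eigs, Fintype.card_subtype]
  calc frobSq M = ∑ j ∈ S, hH.eigenvalues j := by
        rw [frobSq_eq_sum_eigenvalues_conjTranspose_mul_self, Finset.sum_filter_of_ne]
        exact fun _ _ h => h
    _ ≤ S.card • sv M 1 ^ 2 := Finset.sum_le_card_nsmul _ _ _ fun j _ =>
        eigenvalues_conjTranspose_mul_self_le_sv_one_sq M j
    _ = M.rank * sv M 1 ^ 2 := by rw [hrank, nsmul_eq_mul]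

end Rank

theorem gbw_rank_two {m n : ℕ} (B : Matrix (Fin n) (Fin m) ℂ) (hB : B.rank ≤ 2)
    (A C : Matrix (Fin m) (Fin n) ℂ) :
    frobSq (A * B * C - C * B * A) ≤ sv B 1 ^ 2 * frobSq (A ⊗ₖ C - C ⊗ₖ A) := by
  set K := A ⊗ₖ C - C ⊗ₖ A
  have hskew : (realign K)ᵀ = -realign K := by
    rw [realign_sub, transpose_sub, transpose_realign_kronecker, transpose_realign_kronecker,
      neg_sub]
  have hvec : realign K *ᵥ vec Bᵀ = vec (A * B * C - C * B * A) := by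
    rw [realign_sub, sub_mulVec, realign_kronecker_mulVec_vec_transpose,
      realign_kronecker_mulVec_vec_transpose, vec_sub]
  have hB' : frobSq B ≤ 2 * sv B 1 ^ 2 :=
    (frobSq_le_rank_mul_sv_one_sq B).trans (by gcongr; exact_mod_cast hB)
  have hK : 0 ≤ frobSq K / 2 := by have := frobSq_nonneg K; positivity
  calc frobSq (A * B * C - C * B * A)
        = ‖(realign K).toEuclideanLin (toLp 2 (vec Bᵀ))‖ ^ 2 := by
        rw [← norm_sq_toLp_vec, ← hvec]
        rfl
    _ ≤ frobSq K / 2 * frobSq B := by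
        have := two_mul_norm_sq_toEuclideanLin_le_of_transpose_eq_neg hskew (toLp 2 (vec Bᵀ))
        rw [frobSq_realign, norm_sq_toLp_vec, frobSq_transpose] at this
        linarith
    _ ≤ frobSq K / 2 * (2 * sv B 1 ^ 2) := mul_le_mul_of_nonneg_left hB' hK
    _ = sv B 1 ^ 2 * frobSq K := by ring
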